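/- Let F ⊆ P(κ) be a (μ,κ)-densely maximal independent family of size θ. Then the map p ↦ [X_p]_{I_F} is a dense embedding of Add(μ,θ) into the quotient Boolean algebra P(κ)/I_F, where I_F is the density ideal; moreover I_F is a μ-complete uniform ideal on κ (containing all sets of size < κ). -/

import Mathlib

open Cardinal Set

universe u

/-- A condition of the Cohen forcing `Add(μ, I)`: a pair of disjoint subsets of the
index set `I`, both of cardinality `< μ` (the positive and negative coordinates of a
partial function `I → 2` of size `< μ`). -/
structure AddCond (μ : Cardinal.{u}) (I : Type u) where
  pos : Set I
  neg : Set I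
  disj : Disjoint pos neg
  posSmall : #pos < μ
  negSmall : #neg < μ

/-- `q` extends (is stronger than) `p`. -/
def AddLe {μ : Cardinal.{u}} {I : Type u} (q p : AddCond μ I) : Prop :=
  p.pos ⊆ q.pos ∧ p.neg ⊆ q.neg

/-- The Boolean combination of the family `f` coded by the condition `p`:
`X_p = ⋂_{i ∈ pos} f i \ ⋃_{i ∈ neg} f i`. -/
def XInd {μ : Cardinal.{u}} {I : Type u} {S : Type u} (f : I → Set S)
    (p : AddCond μ I) : Set S :=
  (⋂ i ∈ p.pos, f i) \ ⋃ i ∈ p.neg, f i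

/-- The density ideal of the family `f`: `Y` belongs to it iff the set of conditions
`p` with `X_p ∩ Y = ∅` is dense in `Add(μ, I)`. -/
def densityIdeal {I : Type u} {S : Type u} (μ : Cardinal.{u}) (f : I → Set S) :
    Set (Set S) :=
  {Y | ∀ p : AddCond μ I, ∃ q : AddCond μ I, AddLe q p ∧ XInd f q ∩ Y = ∅}

/-!
`Add(μ, I)` is `μ`-closed when `μ` is regular: a chain of fewer than `μ` conditions has the
union of its positive and negative parts as a lower bound. Hence, as in the Baire category
theorem, fewer than `μ` dense sets of conditions have a common refinement below any condition,
which is the `μ`-completeness of `I_F`. Dense maximality yields the dichotomy that every set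
either lies in `I_F` or contains some `X_q`; this gives both the density of `p ↦ [X_p]` and,
since every `X_q` has size `κ`, the uniformity of `I_F`.
-/

def ChainClosed (κ : Cardinal.{u}) (P : Type u) [Preorder P] : Prop :=
  ∀ s : Set P, IsChain (· ≤ ·) s → #s < κ → ∃ r, ∀ x ∈ s, r ≤ x

section ChainClosed

variable {P : Type u} [Preorder P] {κ : Cardinal.{u}} {α : Type u} [LinearOrder α]

lemma ChainClosed.exists_le_insert_image (hP : ChainClosed κ P) (hκ : ℵ₀ ≤ κ) (hα : #α < κ)
    {g : α → P} {t : Set α} {p : P} (hp : ∀ b ∈ t, g b ≤ p)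
    (hg : ∀ b ∈ t, ∀ c ∈ t, b < c → g c ≤ g b) :
    ∃ r, ∀ x ∈ insert p (g '' t), r ≤ x := by
  refine hP _ (IsChain.insert ?_ ?_) ?_
  · rintro _ ⟨b, hb, rfl⟩ _ ⟨c, hc, rfl⟩ hne
    rcases lt_trichotomy b c with h | rfl | h
    · exact Or.inr (hg b hb c hc h)
    · exact absurd rfl hne
    · exact Or.inl (hg c hc b hb h)
  · rintro _ ⟨b, hb, rfl⟩ -
    exact Or.inr (hp b hb)
  · calc #(insert p (g '' t) : Set P) ≤ #(g '' t) + 1 := mk_insert_le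
      _ ≤ #α + 1 := add_le_add_left (mk_image_le.trans (mk_set_le t)) 1
      _ < κ := add_lt_of_lt hκ hα (one_lt_aleph0.trans_le hκ)

variable [WellFoundedLT α]

-- `Classical.epsilon` returns junk when no lower bound (or no element of `D a` below it)
-- exists; `ChainClosed.descendingSeq_spec` shows that this never happens.
noncomputable def descendingSeq (D : α → Set P) (p : P) : α → P :=
  have : Nonempty P := ⟨p⟩
  WellFoundedLT.fix fun a g => Classical.epsilon fun q => q ∈ D a ∧
    q ≤ Classical.epsilon fun r => ∀ x ∈ insert p (range fun b : Iio a => g b b.2), r ≤ x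

lemma descendingSeq_eq (D : α → Set P) (p : P) (a : α) :
    haveI : Nonempty P := ⟨p⟩
    descendingSeq D p a = Classical.epsilon fun q => q ∈ D a ∧
      q ≤ Classical.epsilon fun r => ∀ x ∈ insert p (descendingSeq D p '' Iio a), r ≤ x := by
  rw [descendingSeq, WellFoundedLT.fix_eq, image_eq_range]

variable {D : α → Set P} (p : P)

lemma ChainClosed.descendingSeq_spec (hP : ChainClosed κ P) (hκ : ℵ₀ ≤ κ) (hα : #α < κ)
    (hD : ∀ a, ∀ p, ∃ q ≤ p, q ∈ D a) (a : α) :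
    descendingSeq D p a ∈ D a ∧ descendingSeq D p a ≤ p ∧
      ∀ b < a, descendingSeq D p a ≤ descendingSeq D p b := by
  induction a using WellFoundedLT.induction with
  | _ a ih =>
  have : Nonempty P := ⟨p⟩
  set bound := fun r => ∀ x ∈ insert p (descendingSeq D p '' Iio a), r ≤ x
  have h_bound : bound (Classical.epsilon bound) := Classical.epsilon_spec <|
    hP.exists_le_insert_image hκ hα (fun b hb => (ih b hb).2.1)
      fun b _ c hc hbc => (ih c hc).2.2 b hbc
  obtain ⟨q, hq_le, hq_mem⟩ := hD a (Classical.epsilon bound)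
  have h_next := Classical.epsilon_spec
    (⟨q, hq_mem, hq_le⟩ : ∃ q, q ∈ D a ∧ q ≤ Classical.epsilon bound)
  rw [descendingSeq_eq]
  exact ⟨h_next.1, h_next.2.trans (h_bound p (mem_insert _ _)),
    fun b hb => h_next.2.trans (h_bound _ (mem_insert_of_mem _ ⟨b, hb, rfl⟩))⟩

end ChainClosed

theorem ChainClosed.exists_le_forall_exists_mem_le {P : Type u} [Preorder P] {κ : Cardinal.{u}}
    (hP : ChainClosed κ P) (hκ : ℵ₀ ≤ κ) {α : Type u} (hα : #α < κ) {D : α → Set P}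
    (hD : ∀ a, ∀ p, ∃ q ≤ p, q ∈ D a) (p : P) :
    ∃ r ≤ p, ∀ a, ∃ q ∈ D a, r ≤ q := by
  obtain ⟨_, _⟩ := exists_wellFoundedLT α
  have hseq := hP.descendingSeq_spec p hκ hα hD
  obtain ⟨r, hr⟩ := hP.exists_le_insert_image hκ hα (t := univ) (fun b _ => (hseq b).2.1)
    fun b _ c _ hbc => (hseq c).2.2 b hbc
  exact ⟨r, hr p (mem_insert _ _),
    fun a => ⟨_, (hseq a).1, hr _ (mem_insert_of_mem _ (mem_image_of_mem _ (mem_univ a)))⟩⟩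

section AddCond

variable {μ : Cardinal.{u}} {I S : Type u} {f : I → Set S}

instance : Preorder (AddCond μ I) where
  le := AddLe
  le_refl _ := ⟨subset_rfl, subset_rfl⟩
  le_trans _ _ _ h₁ h₂ := ⟨h₂.1.trans h₁.1, h₂.2.trans h₁.2⟩

lemma AddCond.exists_le_of_disjoint (hμ : μ.IsRegular) {s : Set (AddCond μ I)} (hs : #s < μ)
    (h : Disjoint (⋃ p ∈ s, p.pos) (⋃ p ∈ s, p.neg)) : ∃ r, ∀ p ∈ s, r ≤ p :=
  ⟨⟨⋃ p ∈ s, p.pos, ⋃ p ∈ s, p.neg, h,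
      (card_biUnion_lt_iff_forall_of_isRegular hμ hs).2 fun p _ => p.posSmall,
      (card_biUnion_lt_iff_forall_of_isRegular hμ hs).2 fun p _ => p.negSmall⟩,
    fun _ hp => ⟨subset_biUnion_of_mem hp, subset_biUnion_of_mem hp⟩⟩

lemma AddCond.chainClosed (hμ : μ.IsRegular) : ChainClosed μ (AddCond μ I) := by
  refine fun s hs hcard => AddCond.exists_le_of_disjoint hμ hcard ?_
  simp only [disjoint_iUnion_left, disjoint_iUnion_right]
  intro q hq p hp
  rcases hs.total hp hq with h | h
  · exact p.disj.mono_right h.2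
  · exact q.disj.mono_left h.1

lemma xInd_anti {p q : AddCond μ I} (h : q ≤ p) : XInd f q ⊆ XInd f p :=
  sdiff_subset_sdiff (biInter_subset_biInter_left h.1) (biUnion_subset_biUnion_left h.2)

lemma disjoint_biUnion_of_mem_xInd {s : Set (AddCond μ I)} {x : S}
    (hx : ∀ p ∈ s, x ∈ XInd f p) : Disjoint (⋃ p ∈ s, p.pos) (⋃ p ∈ s, p.neg) := by
  simp only [disjoint_iUnion_left, disjoint_iUnion_right]
  intro q hq p hp
  refine disjoint_left.2 fun i hip hiq => ?_
  exact (hx q hq).2 (mem_iUnion₂.2 ⟨i, hiq, mem_iInter₂.1 (hx p hp).1 i hip⟩)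

lemma xInd_inter_eq_empty_of_incompatible (hμ : μ.IsRegular) {p q : AddCond μ I}
    (h : ¬∃ r, r ≤ p ∧ r ≤ q) : XInd f p ∩ XInd f q = ∅ := by
  refine eq_empty_of_forall_notMem fun x ⟨hxp, hxq⟩ => h ?_
  have hcard : #({p, q} : Set (AddCond μ I)) < μ := (lt_aleph0_of_finite _).trans_le hμ.aleph0_le
  obtain ⟨r, hr⟩ := AddCond.exists_le_of_disjoint hμ hcard <|
    disjoint_biUnion_of_mem_xInd (f := f) (x := x) (by simp [hxp, hxq])
  exact ⟨r, hr p (by simp), hr q (by simp)⟩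

end AddCond

section DensityIdeal

variable {μ : Cardinal.{u}} {I S : Type u} {f : I → Set S}

variable (μ f) in
def DenselyMaximal : Prop :=
  ∀ p : AddCond μ I, ∀ A ⊆ XInd f p, ∃ q ≤ p, XInd f q ∩ A = ∅ ∨ XInd f q ⊆ A

lemma empty_mem_densityIdeal : (∅ : Set S) ∈ densityIdeal μ f :=
  fun p => ⟨p, le_refl p, inter_empty _⟩

lemma diff_mem_densityIdeal {X Y : Set S} (h : X ⊆ Y) : X \ Y ∈ densityIdeal μ f :=
  sdiff_eq_empty.2 h ▸ empty_mem_densityIdeal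

lemma mem_densityIdeal_of_subset {Y Z : Set S} (hY : Y ∈ densityIdeal μ f) (hZ : Z ⊆ Y) :
    Z ∈ densityIdeal μ f := fun p =>
  let ⟨q, hqp, hq⟩ := hY p
  ⟨q, hqp, subset_empty_iff.1 (hq ▸ inter_subset_inter_right _ hZ)⟩

lemma xInd_notMem_densityIdeal (hne : ∀ p : AddCond μ I, (XInd f p).Nonempty)
    (p : AddCond μ I) : XInd f p ∉ densityIdeal μ f := fun hp =>
  let ⟨q, hqp, hq⟩ := hp p
  (hne q).ne_empty (subset_empty_iff.1 (hq ▸ subset_inter subset_rfl (xInd_anti hqp)))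

lemma sUnion_mem_densityIdeal (hμ : μ.IsRegular) {𝒴 : Set (Set S)}
    (h𝒴 : 𝒴 ⊆ densityIdeal μ f) (hcard : #𝒴 < μ) : ⋃₀ 𝒴 ∈ densityIdeal μ f := by
  intro p
  obtain ⟨r, hrp, hr⟩ := (AddCond.chainClosed hμ).exists_le_forall_exists_mem_le
    hμ.aleph0_le hcard (D := fun Y : 𝒴 => {q | XInd f q ∩ Y = ∅}) (fun Y => h𝒴 Y.2) p
  refine ⟨r, hrp, eq_empty_of_forall_notMem ?_⟩
  rintro x ⟨hxr, Y, hY, hxY⟩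
  obtain ⟨q, hq, hrq⟩ := hr ⟨Y, hY⟩
  exact hq.subset ⟨xInd_anti hrq hxr, hxY⟩

lemma DenselyMaximal.mem_densityIdeal_or_exists_xInd_subset (hdm : DenselyMaximal μ f)
    (Y : Set S) : Y ∈ densityIdeal μ f ∨ ∃ q : AddCond μ I, XInd f q ⊆ Y := by
  refine or_iff_not_imp_left.2 fun hY => ?_
  simp only [densityIdeal, mem_ofPred_eq, not_forall, not_exists, not_and] at hY
  obtain ⟨p, hp⟩ := hY
  obtain ⟨q, hqp, hq | hq⟩ := hdm p (XInd f p ∩ Y) inter_subset_left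
  · refine absurd (subset_empty_iff.1 ?_) (hp q hqp)
    exact hq ▸ fun x ⟨hxq, hxY⟩ => ⟨hxq, xInd_anti hqp hxq, hxY⟩
  · exact ⟨q, hq.trans inter_subset_right⟩

end DensityIdeal

theorem stmt_6_general {I : Type u} {S : Type u} (μ : Cardinal.{u}) (hμ : μ.IsRegular)
    (hinf : Cardinal.aleph0 ≤ #S)
    (f : I → Set S)
    (hind : ∀ p : AddCond μ I, #(XInd f p) = #S)
    (hdm : ∀ p : AddCond μ I, ∀ A ⊆ XInd f p, ∃ q : AddCond μ I,
      AddLe q p ∧ (XInd f q ∩ A = ∅ ∨ XInd f q ⊆ A)) :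
    (∀ p : AddCond μ I, XInd f p ∉ densityIdeal μ f) ∧
    (∀ p q : AddCond μ I, AddLe q p → XInd f q \ XInd f p ∈ densityIdeal μ f) ∧
    (∀ p q : AddCond μ I, (¬∃ r : AddCond μ I, AddLe r p ∧ AddLe r q) →
      XInd f p ∩ XInd f q ∈ densityIdeal μ f) ∧
    (∀ Y : Set S, Y ∉ densityIdeal μ f →
      ∃ p : AddCond μ I, XInd f p \ Y ∈ densityIdeal μ f) ∧
    (∀ Y Z : Set S, Y ∈ densityIdeal μ f → Z ⊆ Y → Z ∈ densityIdeal μ f) ∧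
    (∀ 𝒴 : Set (Set S), 𝒴 ⊆ densityIdeal μ f → #𝒴 < μ →
      ⋃₀ 𝒴 ∈ densityIdeal μ f) ∧
    (∀ Y : Set S, #Y < #S → Y ∈ densityIdeal μ f) := by
  have hdm : DenselyMaximal μ f := hdm
  have hne (p : AddCond μ I) : (XInd f p).Nonempty := by
    rw [← nonempty_coe_sort, ← mk_ne_zero_iff, hind p]
    exact (aleph0_pos.trans_le hinf).ne'
  refine ⟨xInd_notMem_densityIdeal hne, fun p q hqp => ?_, fun p q hpq => ?_, fun Y hY => ?_,
    fun Y Z => mem_densityIdeal_of_subset, fun 𝒴 => sUnion_mem_densityIdeal hμ, fun Y hY => ?_⟩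
  · exact diff_mem_densityIdeal (xInd_anti hqp)
  · exact xInd_inter_eq_empty_of_incompatible hμ hpq ▸ empty_mem_densityIdeal
  · obtain ⟨q, hq⟩ := (hdm.mem_densityIdeal_or_exists_xInd_subset Y).resolve_left hY
    exact ⟨q, diff_mem_densityIdeal hq⟩
  · refine (hdm.mem_densityIdeal_or_exists_xInd_subset Y).resolve_right fun ⟨q, hq⟩ => ?_
    exact (hind q ▸ mk_le_mk_of_subset hq).not_gt hY

/-- If `F = {f i : i ∈ I}` is a `(μ,κ)`-densely maximal independent
family, then `p ↦ [X_p]` is a dense embedding of `Add(μ,|F|)` into `𝒫(κ)/I_F`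
(each `X_p` is `I_F`-positive, the map preserves order and incompatibility, and its
range is dense), and `I_F` is a `μ`-complete uniform ideal on `κ`. -/
theorem stmt_6 {I : Type u} {S : Type u} (μ : Cardinal.{u}) (hμ : μ.IsRegular)
    (hinf : Cardinal.aleph0 ≤ #S)
    (f : I → Set S) (hinj : Function.Injective f)
    (hind : ∀ p : AddCond μ I, #(XInd f p) = #S)
    (hdm : ∀ p : AddCond μ I, ∀ A ⊆ XInd f p, ∃ q : AddCond μ I,
      AddLe q p ∧ (XInd f q ∩ A = ∅ ∨ XInd f q ⊆ A)) :
    (∀ p : AddCond μ I, XInd f p ∉ densityIdeal μ f) ∧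
    (∀ p q : AddCond μ I, AddLe q p → XInd f q \ XInd f p ∈ densityIdeal μ f) ∧
    (∀ p q : AddCond μ I, (¬∃ r : AddCond μ I, AddLe r p ∧ AddLe r q) →
      XInd f p ∩ XInd f q ∈ densityIdeal μ f) ∧
    (∀ Y : Set S, Y ∉ densityIdeal μ f →
      ∃ p : AddCond μ I, XInd f p \ Y ∈ densityIdeal μ f) ∧
    (∀ Y Z : Set S, Y ∈ densityIdeal μ f → Z ⊆ Y → Z ∈ densityIdeal μ f) ∧
    (∀ 𝒴 : Set (Set S), 𝒴 ⊆ densityIdeal μ f → #𝒴 < μ →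
      ⋃₀ 𝒴 ∈ densityIdeal μ f) ∧
    (∀ Y : Set S, #Y < #S → Y ∈ densityIdeal μ f) :=
  stmt_6_general μ hμ hinf f hind hdm
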